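/- arXiv:2009.14436 — 7 statements merged into one kernel-verified Lean document; each statement's English description precedes it below -/
import Mathlib

section
/- For any γ ∈ (0,1) and any positive integer T, the sum ∑_{t=1}^T 1/(1-γ^t) is at most 1/(1-γ) + T - 1 + log(1-γ)/log(γ). -/
/-! Set `φ t = log (1 - γ ^ t) / log γ ≥ 0`. Two instances of `log x ≥ 1 - 1/x` give,
for `t ≥ 1`, `1 / (1 - γ ^ (t + 1)) ≤ 1 + φ t - φ (t + 1)`, a discrete form of comparing
the sum with `∫ dt / (1 - γ ^ t)`. Summing telescopes the `φ`-terms to `φ 1 - φ T ≤ φ 1`. -/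

open Real Finset

lemma sub_div_le_log_sub_log {x y : ℝ} (hx : 0 < x) (hy : 0 < y) :
    (x - y) / x ≤ log x - log y := by
  have h := one_sub_inv_le_log_of_pos (div_pos hx hy)
  rwa [log_div hx.ne' hy.ne', inv_div, one_sub_div hx.ne'] at h

lemma inv_one_sub_mul_le {γ x : ℝ} (hγ0 : 0 < γ) (hγ1 : γ < 1) (hx0 : 0 ≤ x) (hx1 : x < 1) :
    1 / (1 - x * γ) ≤ 1 + (log (1 - x) - log (1 - x * γ)) / log γ := by
  have hlogγ : log γ < 0 := log_neg hγ0 hγ1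
  have hxγ : x * γ ≤ x := mul_le_of_le_one_right hx0 hγ1.le
  have hpos : 0 < 1 - x * γ := by linarith
  have hlog : (x - x * γ) / (1 - x * γ) ≤ log (1 - x * γ) - log (1 - x) := by
    have h := sub_div_le_log_sub_log hpos (by linarith : 0 < 1 - x)
    rwa [sub_sub_sub_cancel_left] at h
  have hγlog : x * γ * -log γ ≤ x - x * γ := by
    have h := mul_le_mul_of_nonneg_left (negMulLog_le_one_sub_self hγ0.le) hx0
    rw [negMulLog] at h
    linarith
  have hratio : x * γ / (1 - x * γ) ≤ (log (1 - x * γ) - log (1 - x)) / -log γ := by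
    rw [le_div_iff₀ (neg_pos.mpr hlogγ), div_mul_eq_mul_div]
    exact (div_le_div_of_nonneg_right hγlog hpos.le).trans hlog
  calc 1 / (1 - x * γ) = 1 + x * γ / (1 - x * γ) := by field_simp; ring
    _ ≤ 1 + (log (1 - x) - log (1 - x * γ)) / log γ := by
      rw [div_neg, ← neg_div, neg_sub] at hratio
      linarith

lemma sum_inv_one_sub_pow_le_sub_log {γ : ℝ} (hγ0 : 0 < γ) (hγ1 : γ < 1) {T : ℕ}
    (hT : 1 ≤ T) :
    ∑ t ∈ Icc 1 T, 1 / (1 - γ ^ t) ≤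
      1 / (1 - γ) + (T : ℝ) - 1 + (log (1 - γ) - log (1 - γ ^ T)) / log γ := by
  induction T, hT using Nat.le_induction with
  | base => simp
  | succ n hn ih =>
    have hstep := inv_one_sub_mul_le hγ0 hγ1 (pow_nonneg hγ0.le n)
      (pow_lt_one₀ hγ0.le hγ1 (by omega))
    rw [← pow_succ] at hstep
    rw [sum_Icc_succ_top (by omega), Nat.cast_succ]
    have hsplit : (log (1 - γ) - log (1 - γ ^ (n + 1))) / log γ =
        (log (1 - γ) - log (1 - γ ^ n)) / log γ +
          (log (1 - γ ^ n) - log (1 - γ ^ (n + 1))) / log γ := by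
      ring
    linarith

theorem sum_inv_one_sub_pow_le (γ : ℝ) (hγ0 : 0 < γ) (hγ1 : γ < 1) (T : ℕ) (hT : 1 ≤ T) :
    ∑ t ∈ Finset.Icc 1 T, 1 / (1 - γ ^ t) ≤
      1 / (1 - γ) + (T : ℝ) - 1 + Real.log (1 - γ) / Real.log γ := by
  have hγT : 0 < γ ^ T := pow_pos hγ0 T
  have hγT1 : γ ^ T < 1 := pow_lt_one₀ hγ0.le hγ1 (by omega)
  have htail : 0 ≤ log (1 - γ ^ T) / log γ :=
    div_nonneg_of_nonpos (log_nonpos (by linarith) (by linarith)) (log_neg hγ0 hγ1).le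
  have hsum := sum_inv_one_sub_pow_le_sub_log hγ0 hγ1 hT
  rw [sub_div] at hsum
  linarith
end

section
/- Let f : ℝⁿ → ℝ be ℓ-strongly convex and differentiable with gradient norm bounded by G > 0 on a convex set S (i.e., ‖∇f(x)‖ ≤ G for all x ∈ S). Then f is α-exp-concave on S with α = ℓ/G², i.e., the function x ↦ exp(-(ℓ/G²)·f(x)) is concave on S. -/
/-!
Let `α = ℓ / G²`. It suffices to show that `h = exp (-α f)` lies below its tangent planes:
`h x ≤ h z (1 - α ⟪f' z, x - z⟫)` for `x z ∈ S`. Write `r = ‖x - z‖` and `u = ⟪f' z, x - z⟫`.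
Strong convexity gives `f x - f z ≥ u + ℓ r² / 2`, Cauchy–Schwarz gives `u ≥ -G r`, and the
strong monotonicity `⟪f' x - f' z, x - z⟫ ≥ ℓ r²` of the gradient gives `u ≤ G r - ℓ r²`.
With `t = α u` and `p = ℓ r / G` this is `-p ≤ t ≤ p - p²`, and on that range
`exp (-(t + p² / 2)) ≤ 1 - t` follows from the cubic Taylor bound for `exp`.
-/

open Real

lemma exp_neg_le_one_sub_add_sq_div_two_add_cube {s : ℝ} (hs : |s| ≤ 1) :
    exp (-s) ≤ 1 - s + s ^ 2 / 2 + 2 / 9 * |s| ^ 3 := by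
  have h := (abs_le.1 (Real.exp_bound (x := -s) (by rwa [abs_neg]) (n := 3) (by norm_num))).2
  norm_num [Finset.sum_range_succ, Nat.factorial] at h
  linarith

lemma exp_neg_add_sq_div_two_le_one_sub {p t : ℝ} (hp : 0 ≤ p) (hlo : -p ≤ t)
    (hhi : t ≤ p - p ^ 2) : exp (-(t + p ^ 2 / 2)) ≤ 1 - t := by
  set s := t + p ^ 2 / 2 with hs_def
  set m := p - p ^ 2 / 2 with hm_def
  have hs : |s| ≤ m := abs_le.2 ⟨by linarith, by linarith⟩
  have hp2 : p ≤ 2 := by nlinarith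
  have hm : m ≤ 1 / 2 := by nlinarith [sq_nonneg (p - 1)]
  have htaylor := exp_neg_le_one_sub_add_sq_div_two_add_cube (s := s) (by linarith)
  have hsq : s ^ 2 ≤ m ^ 2 := by rw [← sq_abs]; exact pow_le_pow_left₀ (abs_nonneg s) hs 2
  have hcube : |s| ^ 3 ≤ p ^ 3 := pow_le_pow_left₀ (abs_nonneg s) (by linarith [sq_nonneg p]) 3
  have hbound : m ^ 2 / 2 + 2 / 9 * p ^ 3 ≤ p ^ 2 / 2 := by
    nlinarith [mul_nonneg (pow_nonneg hp 3) (by linarith : (0 : ℝ) ≤ 2 - p)]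
  linarith

lemma concaveOn_of_le_add_tangent {E : Type*} [AddCommGroup E] [Module ℝ E] {S : Set E}
    (hS : Convex ℝ S) {h : E → ℝ} (L : E → E →ₗ[ℝ] ℝ)
    (hL : ∀ x ∈ S, ∀ z ∈ S, h x ≤ h z + L z (x - z)) : ConcaveOn ℝ S h := by
  refine ⟨hS, fun x hx y hy a b ha hb hab => ?_⟩
  set z := a • x + b • y
  have hz : z ∈ S := hS hx hy ha hb hab
  have hbalance : a • (x - z) + b • (y - z) = 0 := by
    rw [smul_sub, smul_sub, ← add_sub_add_comm, ← add_smul, hab, one_smul, sub_self]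
  have hlin : a * L z (x - z) + b * L z (y - z) = 0 := by
    simpa only [map_add, map_smul, smul_eq_mul, map_zero] using congrArg (L z) hbalance
  have hx' := mul_le_mul_of_nonneg_left (hL x hx z hz) ha
  have hy' := mul_le_mul_of_nonneg_left (hL y hy z hz) hb
  simp only [smul_eq_mul]
  linear_combination hx' + hy' + hlin + h z * hab

section InnerProductSpace

variable {E : Type*} [NormedAddCommGroup E] [InnerProductSpace ℝ E] {S : Set E} {f : E → ℝ}
  {f' : E → E} {ℓ : ℝ}

lemma mul_norm_sq_le_inner_sub_of_strongly_convex
    (hsc : ∀ x ∈ S, ∀ y ∈ S, f y ≥ f x + inner ℝ (f' x) (y - x) + ℓ / 2 * ‖y - x‖ ^ 2)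
    {x z : E} (hx : x ∈ S) (hz : z ∈ S) :
    ℓ * ‖x - z‖ ^ 2 ≤ inner ℝ (f' x - f' z) (x - z) := by
  have hxz := hsc x hx z hz
  have hzx := hsc z hz x hx
  rw [norm_sub_rev, ← neg_sub x z, inner_neg_right] at hxz
  rw [inner_sub_left]
  linarith

lemma exp_neg_mul_le_mul_one_sub_inner_of_strongly_convex {G : ℝ}
    (hsc : ∀ x ∈ S, ∀ y ∈ S, f y ≥ f x + inner ℝ (f' x) (y - x) + ℓ / 2 * ‖y - x‖ ^ 2)
    (hgrad : ∀ x ∈ S, ‖f' x‖ ≤ G) (hℓ : 0 ≤ ℓ) (hG : 0 < G) {x z : E} (hx : x ∈ S)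
    (hz : z ∈ S) :
    exp (-(ℓ / G ^ 2) * f x) ≤
      exp (-(ℓ / G ^ 2) * f z) * (1 - ℓ / G ^ 2 * inner ℝ (f' z) (x - z)) := by
  set α := ℓ / G ^ 2 with hα
  set r := ‖x - z‖
  set u := inner ℝ (f' z) (x - z)
  set p := ℓ * r / G with hp
  have hcs : ∀ w ∈ S, |inner ℝ (f' w) (x - z)| ≤ G * r := fun w hw =>
    (abs_real_inner_le_norm _ _).trans (mul_le_mul_of_nonneg_right (hgrad w hw) (norm_nonneg _))
  have hmono := mul_norm_sq_le_inner_sub_of_strongly_convex hsc hx hz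
  rw [inner_sub_left] at hmono
  have hlo : -p ≤ α * u :=
    calc -p = α * -(G * r) := by rw [hα, hp]; field_simp
      _ ≤ α * u := mul_le_mul_of_nonneg_left (abs_le.1 (hcs z hz)).1 (by positivity)
  have hhi : α * u ≤ p - p ^ 2 :=
    calc α * u ≤ α * (G * r - ℓ * r ^ 2) :=
          mul_le_mul_of_nonneg_left (by linarith [(abs_le.1 (hcs x hx)).2]) (by positivity)
      _ = p - p ^ 2 := by rw [hα, hp]; field_simp
  have hgap : α * f z + (α * u + p ^ 2 / 2) ≤ α * f x :=
    calc α * f z + (α * u + p ^ 2 / 2) = α * (f z + u + ℓ / 2 * r ^ 2) := by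
          rw [hα, hp]; field_simp; ring
      _ ≤ α * f x := mul_le_mul_of_nonneg_left (hsc z hz x hx) (by positivity)
  calc exp (-α * f x) ≤ exp (-α * f z + -(α * u + p ^ 2 / 2)) := exp_le_exp.2 (by linarith)
    _ = exp (-α * f z) * exp (-(α * u + p ^ 2 / 2)) := exp_add _ _
    _ ≤ exp (-α * f z) * (1 - α * u) :=
      mul_le_mul_of_nonneg_left (exp_neg_add_sq_div_two_le_one_sub (by positivity) hlo hhi)
        (exp_nonneg _)

end InnerProductSpace

theorem strongly_convex_is_exp_concave_general {n : ℕ}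
    (S : Set (EuclideanSpace ℝ (Fin n))) (hS : Convex ℝ S)
    (f : EuclideanSpace ℝ (Fin n) → ℝ)
    (f' : EuclideanSpace ℝ (Fin n) → EuclideanSpace ℝ (Fin n))
    (ℓ G : ℝ) (hℓ : 0 < ℓ) (hG : 0 < G)
    (hsc : ∀ x ∈ S, ∀ y ∈ S,
      f y ≥ f x + (inner ℝ (f' x) (y - x) : ℝ) + ℓ / 2 * ‖y - x‖ ^ 2)
    (hgrad : ∀ x ∈ S, ‖f' x‖ ≤ G) :
    ConcaveOn ℝ S (fun x => Real.exp (-(ℓ / G ^ 2) * f x)) := by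
  refine concaveOn_of_le_add_tangent hS
    (fun z => -(ℓ / G ^ 2 * exp (-(ℓ / G ^ 2) * f z)) • innerₛₗ ℝ (f' z)) fun x hx z hz => ?_
  have htangent :=
    exp_neg_mul_le_mul_one_sub_inner_of_strongly_convex hsc hgrad hℓ.le hG hx hz
  simp only [LinearMap.smul_apply, innerₛₗ_apply_apply, smul_eq_mul]
  linarith

theorem strongly_convex_is_exp_concave {n : ℕ}
    (S : Set (EuclideanSpace ℝ (Fin n))) (hS : Convex ℝ S)
    (f : EuclideanSpace ℝ (Fin n) → ℝ)
    (f' : EuclideanSpace ℝ (Fin n) → EuclideanSpace ℝ (Fin n))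
    (ℓ G : ℝ) (hℓ : 0 < ℓ) (hG : 0 < G)
    (hdiff : ∀ x, HasGradientAt f (f' x) x)
    (hsc : ∀ x ∈ S, ∀ y ∈ S,
      f y ≥ f x + (inner ℝ (f' x) (y - x) : ℝ) + ℓ / 2 * ‖y - x‖ ^ 2)
    (hgrad : ∀ x ∈ S, ‖f' x‖ ≤ G) :
    ConcaveOn ℝ S (fun x => Real.exp (-(ℓ / G ^ 2) * f x)) :=
  strongly_convex_is_exp_concave_general S hS f f' ℓ G hℓ hG hsc hgrad
end

section
/- Let γ ∈ (0,1). Then for any sequences θ_t, θ_t* ∈ ℝⁿ with ‖θ_{t+1} - θ_t*‖ = ((γ-γ^t)/(1-γ^t))‖θ_t - θ_t*‖ for t ≥ 1, one has ∑_{t=1}^T ‖θ_t - θ_t*‖ ≤ (1/(1-γ))·(‖θ_1 - θ_1*‖ + ∑_{t=2}^T ‖θ_t* - θ_{t-1}*‖). -/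
theorem path_length_sum_bound {n : ℕ} (γ : ℝ) (hγ0 : 0 < γ) (hγ1 : γ < 1)
    (T : ℕ) (hT : 1 ≤ T)
    (θ θs : ℕ → EuclideanSpace ℝ (Fin n))
    (hcontract : ∀ t, 1 ≤ t →
      ‖θ (t + 1) - θs t‖ = ((γ - γ ^ t) / (1 - γ ^ t)) * ‖θ t - θs t‖) :
    ∑ t ∈ Finset.Icc 1 T, ‖θ t - θs t‖ ≤
      (1 / (1 - γ)) * (‖θ 1 - θs 1‖ + ∑ t ∈ Finset.Icc 2 T, ‖θs t - θs (t - 1)‖) := by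
  set a : ℕ → ℝ := fun t => ‖θ t - θs t‖ with ha
  have h1γ : (0:ℝ) < 1 - γ := by linarith
  -- step lemma: for t ≥ 2, a t ≤ γ * a (t-1) + ‖θs t - θs (t-1)‖
  have hstep : ∀ t, 2 ≤ t → a t ≤ γ * a (t - 1) + ‖θs t - θs (t - 1)‖ := by
    intro t ht
    obtain ⟨s, rfl⟩ : ∃ s, t = s + 1 := ⟨t - 1, by omega⟩
    have hs1 : 1 ≤ s := by omega
    have hpow : γ ^ s < 1 := pow_lt_one₀ hγ0.le hγ1 (by omega)
    have hpow0 : 0 < 1 - γ ^ s := by linarith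
    have hc : (γ - γ ^ s) / (1 - γ ^ s) ≤ γ := by
      rw [div_le_iff₀ hpow0]
      have : γ * γ ^ s ≤ γ ^ s := by
        nlinarith [pow_pos hγ0 s]
      nlinarith
    have htri : a (s + 1) ≤ ‖θ (s + 1) - θs s‖ + ‖θs (s + 1) - θs s‖ := by
      have := norm_sub_le_norm_sub_add_norm_sub (θ (s+1)) (θs s) (θs (s+1))
      calc a (s+1) = ‖θ (s+1) - θs (s+1)‖ := rfl
        _ ≤ ‖θ (s+1) - θs s‖ + ‖θs s - θs (s+1)‖ := norm_sub_le_norm_sub_add_norm_sub _ _ _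
        _ = ‖θ (s+1) - θs s‖ + ‖θs (s+1) - θs s‖ := by rw [norm_sub_rev (θs s)]
    have hc2 : ‖θ (s + 1) - θs s‖ ≤ γ * a s := by
      rw [hcontract s hs1]
      exact mul_le_mul_of_nonneg_right hc (norm_nonneg _)
    have : s + 1 - 1 = s := by omega
    rw [this]
    calc a (s+1) ≤ ‖θ (s+1) - θs s‖ + ‖θs (s+1) - θs s‖ := htri
      _ ≤ γ * a s + ‖θs (s+1) - θs s‖ := by linarith
  set S := ∑ t ∈ Finset.Icc 1 T, a t with hS
  set B := ∑ t ∈ Finset.Icc 2 T, ‖θs t - θs (t - 1)‖ with hB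
  have hanneg : ∀ t, 0 ≤ a t := fun t => norm_nonneg _
  have hsplit : S = a 1 + ∑ t ∈ Finset.Icc 2 T, a t := by
    rw [hS, ← Finset.sum_Ioc_add_eq_sum_Icc hT]
    rw [add_comm]
    congr 1
  have hsum2 : ∑ t ∈ Finset.Icc 2 T, a t ≤ γ * (∑ t ∈ Finset.Icc 2 T, a (t-1)) + B := by
    rw [hB, Finset.mul_sum, ← Finset.sum_add_distrib]
    exact Finset.sum_le_sum fun t ht => hstep t (Finset.mem_Icc.mp ht).1
  have hsub : ∑ t ∈ Finset.Icc 2 T, a (t-1) ≤ S := by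
    have : ∑ t ∈ Finset.Icc 2 T, a (t-1) = ∑ t ∈ Finset.Icc 1 (T-1), a t := by
      apply Finset.sum_nbij' (fun t => t - 1) (fun t => t + 1) <;>
        intro x hx <;> simp only [Finset.mem_Icc] at * <;> first | omega | rfl
    rw [this, hS]
    apply Finset.sum_le_sum_of_subset_of_nonneg
    · intro x hx; simp only [Finset.mem_Icc] at *; omega
    · intro x _ _; exact hanneg x
  have hBnneg : 0 ≤ B := Finset.sum_nonneg fun _ _ => norm_nonneg _
  have key : S ≤ a 1 + γ * S + B := by
    have := mul_le_mul_of_nonneg_left hsub hγ0.le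
    linarith
  rw [hS] at *
  rw [div_mul_eq_mul_div, le_div_iff₀ h1γ]
  ring_nf
  nlinarith [key]
end

section
/- Let S ⊆ ℝⁿ be a nonempty closed convex set, and let f : ℝⁿ → ℝ be differentiable, ℓ-strongly convex and u-smooth with 0 < ℓ ≤ u. Let γ ∈ (0,1), set η = (1-γ)/(ℓ(γ - γ^t) + u(1-γ)) for some fixed t ≥ 1 (so that 1/η ≥ u), and define θ' = Π_S(θ - η ∇f(θ)) for θ ∈ S. If θ* ∈ S minimizes f over S, then ‖θ' - θ*‖² ≤ (1 - ℓ(1-γ)/(ℓγ + u(1-γ)))·‖θ - θ*‖². -/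
/-!
With `g = ∇f(θ)` and `η ≤ 1/u`, the descent lemma bounds `f θ'` by the quadratic model
`f θ + ⟪g, θ' - θ⟫ + ‖θ' - θ‖² / (2η)`, and strong convexity bounds `f θ*` from below by
`f θ + ⟪g, θ* - θ⟫ + ℓ/2 ‖θ* - θ‖²`. The optimality condition of the projection at `z = θ*`
turns `⟪g, θ' - θ*⟫` into `⟪θ' - θ, θ* - θ'⟫ / η`, and the three-point identity gives
`0 ≤ f θ' - f θ* ≤ ((1 - ηℓ)‖θ - θ*‖² - ‖θ' - θ*‖²) / (2η)`.
The choice of `η` makes `η ≥ (1 - γ)/(ℓγ + u(1 - γ))`.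
-/

open RealInnerProductSpace

section GradientStep

variable {E : Type*} [NormedAddCommGroup E] [InnerProductSpace ℝ E]

theorem le_add_inner_add_of_norm_gradient_sub_le [CompleteSpace E] {f : E → ℝ} {f' : E → E}
    {u : ℝ}
    (hf : ∀ x, HasGradientAt f (f' x) x) (hf' : ∀ x y, ‖f' x - f' y‖ ≤ u * ‖x - y‖)
    (x y : E) : f y ≤ f x + ⟪f' x, y - x⟫ + u / 2 * ‖y - x‖ ^ 2 := by
  set v := y - x
  let φ : ℝ → ℝ := fun s => f (x + s • v) - s * ⟪f' x, v⟫ - u / 2 * s ^ 2 * ‖v‖ ^ 2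
  have hφ : ∀ s, HasDerivAt φ (⟪f' (x + s • v) - f' x, v⟫ - u * s * ‖v‖ ^ 2) s := by
    intro s
    have hline : HasDerivAt (fun r : ℝ => x + r • v) v s := by
      simpa using ((hasDerivAt_id s).smul_const v).const_add x
    have hfline := (hf (x + s • v)).hasFDerivAt.comp_hasDerivAt s hline
    simp only [Function.comp_def, InnerProductSpace.toDual_apply_apply] at hfline
    have hquad := ((hasDerivAt_pow 2 s).const_mul (u / 2)).mul_const (‖v‖ ^ 2)
    refine ((hfline.sub ((hasDerivAt_id s).mul_const ⟪f' x, v⟫)).sub hquad).congr_deriv ?_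
    rw [inner_sub_left]
    ring
  obtain ⟨ξ, ⟨hξ0, -⟩, hξ⟩ := exists_hasDerivAt_eq_slope φ _ zero_lt_one
    (fun s _ => (hφ s).continuousAt.continuousWithinAt) (fun s _ => hφ s)
  have hslope : ⟪f' (x + ξ • v) - f' x, v⟫ ≤ u * ξ * ‖v‖ ^ 2 :=
    calc ⟪f' (x + ξ • v) - f' x, v⟫ ≤ ‖f' (x + ξ • v) - f' x‖ * ‖v‖ := real_inner_le_norm _ _
      _ ≤ u * ‖x + ξ • v - x‖ * ‖v‖ := by gcongr; exact hf' _ _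
      _ = u * ξ * ‖v‖ ^ 2 := by
        rw [add_sub_cancel_left, norm_smul, Real.norm_of_nonneg hξ0.le]; ring
  have hφ01 : φ 1 ≤ φ 0 := by
    rw [sub_zero, div_one] at hξ
    linarith
  simp only [φ, v, one_smul, zero_smul, add_zero, add_sub_cancel, one_pow, zero_pow two_ne_zero,
    mul_zero, zero_mul, sub_zero, one_mul, mul_one] at hφ01
  linarith

theorem real_inner_sub_le_zero_of_forall_norm_sub_le {K : Set E} (hK : Convex ℝ K) {p v : E}
    (hv : v ∈ K) (h : ∀ w ∈ K, ‖v - p‖ ≤ ‖w - p‖) : ∀ w ∈ K, ⟪p - v, w - v⟫ ≤ 0 := by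
  have : Nonempty K := ⟨⟨v, hv⟩⟩
  refine (norm_eq_iInf_iff_real_inner_le_zero hK hv).1 (le_antisymm ?_ ?_)
  · exact le_ciInf fun w => by simpa only [norm_sub_rev p] using h w w.2
  · exact ciInf_le ⟨0, Set.forall_mem_range.2 fun w : K => norm_nonneg (p - w)⟩ ⟨v, hv⟩

theorem norm_sub_sq_le_of_projected_gradient_step {f : E → ℝ} {g θ θ' θs : E} {ℓ u η : ℝ}
    (hη : 0 < η) (hηu : η * u ≤ 1)
    (hsc : f θs ≥ f θ + ⟪g, θs - θ⟫ + ℓ / 2 * ‖θs - θ‖ ^ 2)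
    (hdesc : f θ' ≤ f θ + ⟪g, θ' - θ⟫ + u / 2 * ‖θ' - θ‖ ^ 2)
    (hproj : ⟪θ - η • g - θ', θs - θ'⟫ ≤ 0) (hmin : f θs ≤ f θ') :
    ‖θ' - θs‖ ^ 2 ≤ (1 - η * ℓ) * ‖θ - θs‖ ^ 2 := by
  set a := θ' - θ
  set b := θs - θ'
  have hθs : θs - θ = a + b := by simp only [a, b]; abel
  have hθ : θ - η • g - θ' = -(η • g) - a := by simp only [a]; abel
  rw [hθs, norm_add_sq_real, inner_add_right] at hsc
  rw [hθ, inner_sub_left, inner_neg_left, real_inner_smul_left] at hproj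
  rw [← norm_neg (θ' - θs), neg_sub, ← norm_neg (θ - θs), neg_sub, hθs, norm_add_sq_real]
  have hquad : η * (u / 2 * ‖a‖ ^ 2) ≤ ‖a‖ ^ 2 / 2 := by
    nlinarith [sq_nonneg ‖a‖]
  nlinarith [mul_le_mul_of_nonneg_left (hmin.trans hdesc) hη.le]

end GradientStep

theorem step_size_bounds {ℓ u γ η : ℝ} {t : ℕ} (hℓ : 0 < ℓ) (hℓu : ℓ ≤ u)
    (hγ0 : 0 < γ) (hγ1 : γ < 1) (ht : 1 ≤ t)
    (hη : η = (1 - γ) / (ℓ * (γ - γ ^ t) + u * (1 - γ))) :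
    0 < η ∧ η * u ≤ 1 ∧ (1 - γ) / (ℓ * γ + u * (1 - γ)) ≤ η := by
  have hγt : γ ^ t ≤ γ := pow_le_of_le_one hγ0.le hγ1.le (by omega)
  have hγt0 : 0 ≤ γ ^ t := pow_nonneg hγ0.le t
  have hden : 0 < ℓ * (γ - γ ^ t) + u * (1 - γ) := by nlinarith
  subst hη
  refine ⟨div_pos (by linarith) hden, ?_, ?_⟩
  · rw [div_mul_eq_mul_div, div_le_one hden]
    nlinarith
  · gcongr
    · linarith

theorem smooth_strongly_convex_gd_contraction_general {n : ℕ}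
    (S : Set (EuclideanSpace ℝ (Fin n)))
    (hSc : Convex ℝ S)
    (f : EuclideanSpace ℝ (Fin n) → ℝ)
    (f' : EuclideanSpace ℝ (Fin n) → EuclideanSpace ℝ (Fin n))
    (ℓ u : ℝ) (hℓ : 0 < ℓ) (hℓu : ℓ ≤ u)
    (hdiff : ∀ x, HasGradientAt f (f' x) x)
    (hsc : ∀ x y, f y ≥ f x + (inner ℝ (f' x) (y - x) : ℝ) + ℓ / 2 * ‖y - x‖ ^ 2)
    (hsmooth : ∀ x y, ‖f' x - f' y‖ ≤ u * ‖x - y‖)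
    (γ : ℝ) (hγ0 : 0 < γ) (hγ1 : γ < 1) (t : ℕ) (ht : 1 ≤ t)
    (η : ℝ) (hη : η = (1 - γ) / (ℓ * (γ - γ ^ t) + u * (1 - γ)))
    (θ θ' θs : EuclideanSpace ℝ (Fin n)) (hθ' : θ' ∈ S)
    (hproj : ∀ z ∈ S, ‖θ' - (θ - η • f' θ)‖ ≤ ‖z - (θ - η • f' θ)‖)
    (hθs : θs ∈ S) (hmin : ∀ z ∈ S, f θs ≤ f z) :
    ‖θ' - θs‖ ^ 2 ≤ (1 - ℓ * (1 - γ) / (ℓ * γ + u * (1 - γ))) * ‖θ - θs‖ ^ 2 := by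
  obtain ⟨hη0, hηu, hηγ⟩ := step_size_bounds hℓ hℓu hγ0 hγ1 ht hη
  have hstep := norm_sub_sq_le_of_projected_gradient_step hη0 hηu (hsc θ θs)
    (le_add_inner_add_of_norm_gradient_sub_le hdiff hsmooth θ θ')
    (real_inner_sub_le_zero_of_forall_norm_sub_le hSc hθ' hproj θs hθs) (hmin θ' hθ')
  calc ‖θ' - θs‖ ^ 2 ≤ (1 - η * ℓ) * ‖θ - θs‖ ^ 2 := hstep
    _ ≤ (1 - ℓ * (1 - γ) / (ℓ * γ + u * (1 - γ))) * ‖θ - θs‖ ^ 2 := by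
      rw [mul_div_assoc, mul_comm η]
      gcongr

theorem smooth_strongly_convex_gd_contraction {n : ℕ}
    (S : Set (EuclideanSpace ℝ (Fin n))) (hSne : S.Nonempty)
    (hScl : IsClosed S) (hSc : Convex ℝ S)
    (f : EuclideanSpace ℝ (Fin n) → ℝ)
    (f' : EuclideanSpace ℝ (Fin n) → EuclideanSpace ℝ (Fin n))
    (ℓ u : ℝ) (hℓ : 0 < ℓ) (hℓu : ℓ ≤ u)
    (hdiff : ∀ x, HasGradientAt f (f' x) x)
    (hsc : ∀ x y, f y ≥ f x + (inner ℝ (f' x) (y - x) : ℝ) + ℓ / 2 * ‖y - x‖ ^ 2)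
    (hsmooth : ∀ x y, ‖f' x - f' y‖ ≤ u * ‖x - y‖)
    (γ : ℝ) (hγ0 : 0 < γ) (hγ1 : γ < 1) (t : ℕ) (ht : 1 ≤ t)
    (η : ℝ) (hη : η = (1 - γ) / (ℓ * (γ - γ ^ t) + u * (1 - γ)))
    (θ θ' θs : EuclideanSpace ℝ (Fin n)) (hθ : θ ∈ S) (hθ' : θ' ∈ S)
    (hproj : ∀ z ∈ S, ‖θ' - (θ - η • f' θ)‖ ≤ ‖z - (θ - η • f' θ)‖)
    (hθs : θs ∈ S) (hmin : ∀ z ∈ S, f θs ≤ f z) :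
    ‖θ' - θs‖ ^ 2 ≤ (1 - ℓ * (1 - γ) / (ℓ * γ + u * (1 - γ))) * ‖θ - θs‖ ^ 2 :=
  smooth_strongly_convex_gd_contraction_general S hSc f f' ℓ u hℓ hℓu hdiff hsc hsmooth γ hγ0 hγ1 t
    ht η hη θ θ' θs hθ' hproj hθs hmin
end

section
/- Suppose 0 ≤ L ≤ L̃ and 0 < R ≤ R̃. Let β = 1/(1 + √(2R̃/L̃)) (i.e., β = g(L̃/R̃) with g(z)=1/(1+√(2/z))). Then (-L·ln β + R)/(1 - β) ≤ L + √(2 L̃ R̃) + R. -/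
/-!
The Freund–Schapire bound `-ln β ≤ (β⁻¹ - β) / 2` on `(0, 1]` (which is `sinh t ≤ t` for
`t = ln β ≤ 0`) turns the left-hand side into `L (β⁻¹ + 1) / 2 + R / (1 - β)`. Writing
`β = 1 / (1 + s)` with `s = √(2 R̃ / L̃)`, this equals `L + R + L s / 2 + R / s`, and
`L̃ s / 2 + R̃ / s = √(2 L̃ R̃)` because `s` balances the two terms.
-/

open Real

lemma Real.neg_log_le_half_inv_sub {β : ℝ} (hβ₀ : 0 < β) (hβ₁ : β ≤ 1) :
    -log β ≤ (β⁻¹ - β) / 2 := by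
  have h : sinh (log β) ≤ log β := sinh_le_self_iff.mpr (log_nonpos hβ₀.le hβ₁)
  rw [sinh_log hβ₀] at h
  linarith

lemma neg_mul_log_add_div_one_sub_le {L R β : ℝ} (hL : 0 ≤ L) (hβ₀ : 0 < β) (hβ₁ : β < 1) :
    (-L * log β + R) / (1 - β) ≤ L * (β⁻¹ + 1) / 2 + R / (1 - β) := by
  have hlog : -L * log β ≤ L * (β⁻¹ - β) / 2 := by
    rw [neg_mul, ← mul_neg, mul_div_assoc]
    exact mul_le_mul_of_nonneg_left (neg_log_le_half_inv_sub hβ₀ hβ₁.le) hL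
  rw [add_div]
  gcongr ?_ + _
  rw [div_le_iff₀ (sub_pos.mpr hβ₁)]
  linarith [show L * (β⁻¹ + 1) / 2 * (1 - β) = L * (β⁻¹ - β) / 2 by field_simp; ring]

lemma mul_sqrt_div_two_add_div_sqrt {a b : ℝ} (ha : 0 < a) (hb : 0 ≤ b) :
    a * √(2 * b / a) / 2 + b / √(2 * b / a) = √(2 * a * b) := by
  rcases hb.eq_or_lt with rfl | hb
  · simp
  set s := √(2 * b / a)
  have hs : 0 < s := sqrt_pos.mpr (by positivity)
  have hbs : b = a * s ^ 2 / 2 := by rw [sq_sqrt (by positivity)]; field_simp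
  rw [show 2 * a * b = (a * s) ^ 2 by rw [hbs]; ring, sqrt_sq (by positivity), hbs]
  field_simp
  ring

theorem freund_schapire_lemma (L Lt R Rt : ℝ)
    (hL : 0 ≤ L) (hLLt : L ≤ Lt) (hLt : 0 < Lt)
    (hR : 0 < R) (hRRt : R ≤ Rt)
    (β : ℝ) (hβ : β = 1 / (1 + Real.sqrt (2 * Rt / Lt))) :
    (-L * Real.log β + R) / (1 - β) ≤ L + Real.sqrt (2 * Lt * Rt) + R := by
  set s := √(2 * Rt / Lt)
  have hs : 0 < s := sqrt_pos.mpr (by have := hR.trans_le hRRt; positivity)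
  have hβ₀ : 0 < β := by rw [hβ]; positivity
  have hβ₁ : β < 1 := by rw [hβ, div_lt_one (by positivity)]; linarith
  calc (-L * log β + R) / (1 - β) ≤ L * (β⁻¹ + 1) / 2 + R / (1 - β) :=
        neg_mul_log_add_div_one_sub_le hL hβ₀ hβ₁
    _ = L + R + L * s / 2 + R / s := by rw [hβ]; field_simp [hs.ne']; ring
    _ ≤ L + R + Lt * s / 2 + Rt / s := by gcongr
    _ = L + √(2 * Lt * Rt) + R := by
        rw [← mul_sqrt_div_two_add_div_sqrt hLt (hR.le.trans hRRt)]; ring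
end

section
/- Let C be a symmetric matrix with 0 ⪯ C ⪯ I and let ρ₁, ρ₂ ∈ ℝ. Then exp(C·ρ₁ + (I - C)·ρ₂) ⪯ C·exp(ρ₁) + (I - C)·exp(ρ₂), where exp on the left is the matrix exponential and exp(ρᵢ) are scalars. -/
/-!
Apply the continuous functional calculus to `C`, whose spectrum lies in `[0, 1]`: both sides are
`cfc f C` and `cfc g C` for `f x = exp (ρ₁ x + ρ₂ (1 - x))` and `g x = x e^ρ₁ + (1 - x) e^ρ₂`, and
`f ≤ g` on `[0, 1]` by convexity of `exp`, so the inequality follows from monotonicity of `cfc`.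
-/

theorem Real.exp_affine_le {t : ℝ} (ht₀ : 0 ≤ t) (ht₁ : t ≤ 1) (a b : ℝ) :
    Real.exp (a * t + b * (1 - t)) ≤ Real.exp a * t + Real.exp b * (1 - t) := by
  have h := convexOn_exp.2 (Set.mem_univ a) (Set.mem_univ b) ht₀ (sub_nonneg.2 ht₁)
    (add_sub_cancel t 1)
  rw [mul_comm a, mul_comm b, mul_comm (Real.exp a), mul_comm (Real.exp b)]
  simpa only [smul_eq_mul] using h

section

variable {A : Type*} [Ring A] [StarRing A] [Algebra ℝ A] [TopologicalSpace A]
  [ContinuousFunctionalCalculus ℝ A IsSelfAdjoint]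

theorem cfc_affine (a b : ℝ) {c : A} (hc : IsSelfAdjoint c) :
    cfc (fun x : ℝ ↦ a * x + b * (1 - x)) c = a • c + b • (1 - c) := by
  rw [cfc_add .., cfc_const_mul_id .., cfc_const_mul .., cfc_sub .., cfc_const_one .., cfc_id' ..]

variable [ContinuousMap.UniqueHom ℝ A] [PartialOrder A] [StarOrderedRing A]
  [NonnegSpectrumClass ℝ A]

theorem cfc_exp_affine_le {c : A} (hc₀ : 0 ≤ c) (hc₁ : c ≤ 1) (a b : ℝ) :
    cfc Real.exp (a • c + b • (1 - c)) ≤ Real.exp a • c + Real.exp b • (1 - c) := by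
  have hc : IsSelfAdjoint c := .of_nonneg hc₀
  have hspec : ∀ t ∈ spectrum ℝ c, 0 ≤ t ∧ t ≤ 1 := fun t ht ↦
    ⟨spectrum_nonneg_of_nonneg hc₀ ht,
      (le_algebraMap_iff_spectrum_le (r := 1)).1 (by simpa using hc₁) t ht⟩
  rw [← cfc_affine a b hc, ← cfc_affine _ _ hc, ← cfc_comp' ..]
  exact cfc_mono fun t ht ↦ Real.exp_affine_le (hspec t ht).1 (hspec t ht).2 a b

end

-- The operator norm is needed only to invoke the normed-algebra lemma; neither side depends on it.
open scoped Matrix.Norms.L2Operator in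
theorem Matrix.cfc_exp_eq_exp {n : Type*} [Fintype n] [DecidableEq n]
    {A : Matrix n n ℝ} (hA : IsSelfAdjoint A) : cfc Real.exp A = NormedSpace.exp A :=
  CFC.real_exp_eq_normedSpace_exp hA

theorem matrix_exp_convexity_bound {n : ℕ} (C : Matrix (Fin n) (Fin n) ℝ)
    (hC : C.PosSemidef) (hC1 : ((1 : Matrix (Fin n) (Fin n) ℝ) - C).PosSemidef)
    (ρ₁ ρ₂ : ℝ) :
    (Real.exp ρ₁ • C + Real.exp ρ₂ • ((1 : Matrix (Fin n) (Fin n) ℝ) - C)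
      - NormedSpace.exp (ρ₁ • C + ρ₂ • ((1 : Matrix (Fin n) (Fin n) ℝ) - C))).PosSemidef := by
  open scoped MatrixOrder in
  have hC₀ : 0 ≤ C := Matrix.nonneg_iff_posSemidef.2 hC
  have hC₁ : C ≤ 1 := Matrix.le_iff.2 hC1
  have hsa : IsSelfAdjoint (ρ₁ • C + ρ₂ • (1 - C)) := by cfc_tac
  rw [← Matrix.cfc_exp_eq_exp hsa]
  exact Matrix.le_iff.1 (cfc_exp_affine_le hC₀ hC₁ ρ₁ ρ₂)
end

section
/- Let S ⊆ ℝⁿ be a nonempty closed convex set and let g : ℝⁿ → ℝ be convex and differentiable. Let y ∈ ℝⁿ and x = Π_S(y) be the Euclidean projection of y onto S. If x - ε₀·∇g(x) ∈ S for some ε₀ > 0, then g(x) ≤ g(y). -/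
/-!
Testing the variational inequality of the projection at the feasible point `x - ε₀ • ∇g(x)`
shows `⟪∇g(x), y - x⟫ ≥ 0`; the first-order convexity bound `g y ≥ g x + ⟪∇g(x), y - x⟫` then
gives `g x ≤ g y`.
-/

open InnerProductSpace

theorem real_inner_sub_nonpos_of_forall_norm_sub_le {F : Type*} [NormedAddCommGroup F]
    [InnerProductSpace ℝ F] {K : Set F} (hK : Convex ℝ K) {u v : F} (hv : v ∈ K)
    (hmin : ∀ w ∈ K, ‖v - u‖ ≤ ‖w - u‖) : ∀ w ∈ K, ⟪u - v, w - v⟫_ℝ ≤ 0 := by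
  have : Nonempty K := ⟨⟨v, hv⟩⟩
  refine (norm_eq_iInf_iff_real_inner_le_zero hK hv).mp (le_antisymm ?_ ?_)
  · exact le_ciInf fun w => by simpa only [norm_sub_rev u] using hmin w w.2
  · exact ciInf_le (f := fun w : K => ‖u - w‖)
      ⟨0, Set.forall_mem_range.2 fun _ => norm_nonneg _⟩ ⟨v, hv⟩

theorem ConvexOn.add_fderiv_sub_le {E : Type*} [NormedAddCommGroup E] [NormedSpace ℝ E]
    {s : Set E} {f : E → ℝ} {f' : E →L[ℝ] ℝ} {x y : E} (hf : ConvexOn ℝ s f)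
    (hx : x ∈ s) (hy : y ∈ s) (hf' : HasFDerivAt f f' x) : f x + f' (y - x) ≤ f y := by
  let ℓ : ℝ →ᵃ[ℝ] E := AffineMap.lineMap x y
  have hφ : ConvexOn ℝ (ℓ ⁻¹' s) (f ∘ ℓ) := hf.comp_affineMap ℓ
  have hφ' : HasDerivAt (f ∘ ℓ) (f' (y - x)) 0 :=
    HasFDerivAt.comp_hasDerivAt (0 : ℝ) (by simpa [ℓ] using hf') AffineMap.hasDerivAt_lineMap
  have hslope := hφ.le_slope_of_hasDerivAt (x := 0) (y := 1) (by simpa [ℓ] using hx)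
    (by simpa [ℓ] using hy) one_pos hφ'
  simp only [slope_def_field, Function.comp_apply, ℓ, AffineMap.lineMap_apply_zero,
    AffineMap.lineMap_apply_one, sub_zero, div_one] at hslope
  linarith

theorem constraint_value_le_at_projection_general {n : ℕ}
    (S : Set (EuclideanSpace ℝ (Fin n)))
    (hSc : Convex ℝ S)
    (g : EuclideanSpace ℝ (Fin n) → ℝ)
    (g' : EuclideanSpace ℝ (Fin n) → EuclideanSpace ℝ (Fin n))
    (hconv : ConvexOn ℝ Set.univ g)
    (hdiff : ∀ z, HasGradientAt g (g' z) z)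
    (y x : EuclideanSpace ℝ (Fin n)) (hx : x ∈ S)
    (hproj : ∀ z ∈ S, ‖x - y‖ ≤ ‖z - y‖)
    (ε₀ : ℝ) (hε₀ : 0 < ε₀) (hmem : x - ε₀ • g' x ∈ S) :
    g x ≤ g y := by
  have hvar := real_inner_sub_nonpos_of_forall_norm_sub_le hSc hx hproj _ hmem
  have hdescent : 0 ≤ ⟪g' x, y - x⟫_ℝ := by
    rw [sub_sub_cancel_left, inner_neg_right, real_inner_smul_right, real_inner_comm] at hvar
    exact (mul_nonneg_iff_of_pos_left hε₀).mp (by linarith)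
  have htangent : g x + ⟪g' x, y - x⟫_ℝ ≤ g y := by
    simpa using hconv.add_fderiv_sub_le (Set.mem_univ x) (Set.mem_univ y) (hdiff x).hasFDerivAt
  linarith

theorem constraint_value_le_at_projection {n : ℕ}
    (S : Set (EuclideanSpace ℝ (Fin n))) (hSne : S.Nonempty)
    (hScl : IsClosed S) (hSc : Convex ℝ S)
    (g : EuclideanSpace ℝ (Fin n) → ℝ)
    (g' : EuclideanSpace ℝ (Fin n) → EuclideanSpace ℝ (Fin n))
    (hconv : ConvexOn ℝ Set.univ g)
    (hdiff : ∀ z, HasGradientAt g (g' z) z)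
    (y x : EuclideanSpace ℝ (Fin n)) (hx : x ∈ S)
    (hproj : ∀ z ∈ S, ‖x - y‖ ≤ ‖z - y‖)
    (ε₀ : ℝ) (hε₀ : 0 < ε₀) (hmem : x - ε₀ • g' x ∈ S) :
    g x ≤ g y :=
  constraint_value_le_at_projection_general S hSc g g' hconv hdiff y x hx hproj ε₀ hε₀ hmem
end
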